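/- Pinsker's inequality: for probability densities p and q on a measure space, the L¹ distance satisfies ‖p − q‖₁ ≤ √(2·KL(p‖q)), where KL(p‖q) = ∫ p log(p/q). -/

import Mathlib

/-!
Pointwise, for `a, b ≥ 0` one has `3 (a - b)² ≤ (2a + 4b) (a log (a/b) - a + b)`; writing
`t = a/b`, this is `3 (t - 1)² ≤ (2t + 4) klFun t`, whose two sides agree to first order at `t = 1`
and whose difference has derivative `4 ((t + 1) log t - 2 (t - 1))`, of the sign of `t - 1`.
By AM-GM this gives `c |a - b| ≤ c² (a + 2b) / 6 + (a log (a/b) - a + b)` for every real `c`.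
Integrating with `c = ‖p - q‖₁` yields `‖p - q‖₁² ≤ ‖p - q‖₁² / 2 + KL(p‖q)`.
-/

open MeasureTheory Set Real InformationTheory

lemma monotoneOn_add_one_mul_log_sub_two_mul :
    MonotoneOn (fun t : ℝ => (t + 1) * log t - 2 * (t - 1)) (Ioi 0) := by
  have hderiv : ∀ t ∈ Ioi (0 : ℝ), HasDerivAt (fun t : ℝ => (t + 1) * log t - 2 * (t - 1))
      (log t + t⁻¹ - 1) t := by
    intro t (ht : 0 < t)
    refine ((((hasDerivAt_id t).add_const 1).mul (hasDerivAt_log ht.ne')).sub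
      (((hasDerivAt_id t).sub_const 1).const_mul 2)).congr_deriv ?_
    simp only [id]
    field_simp
    ring
  refine monotoneOn_of_hasDerivWithinAt_nonneg (f' := fun t => log t + t⁻¹ - 1) (convex_Ioi 0)
    (fun t ht => (hderiv t ht).continuousAt.continuousWithinAt) (fun t ht => ?_) fun t ht => ?_
  all_goals rw [interior_Ioi] at ht
  · exact (hderiv t ht).hasDerivWithinAt
  · linarith [one_sub_inv_le_log_of_pos ht]

lemma add_one_mul_log_le_two_mul_sub_one {t : ℝ} (ht₀ : 0 < t) (ht₁ : t ≤ 1) :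
    (t + 1) * log t ≤ 2 * (t - 1) := by
  have := monotoneOn_add_one_mul_log_sub_two_mul ht₀ (mem_Ioi.2 one_pos) ht₁
  simp only [log_one] at this
  linarith

lemma two_mul_sub_one_le_add_one_mul_log {t : ℝ} (ht : 1 ≤ t) :
    2 * (t - 1) ≤ (t + 1) * log t := by
  have := monotoneOn_add_one_mul_log_sub_two_mul (mem_Ioi.2 one_pos)
    (mem_Ioi.2 (one_pos.trans_le ht)) ht
  simp only [log_one] at this
  linarith

lemma three_mul_sq_sub_one_le_mul_klFun {t : ℝ} (ht : 0 ≤ t) :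
    3 * (t - 1) ^ 2 ≤ (2 * t + 4) * klFun t := by
  set g : ℝ → ℝ := fun t => (2 * t + 4) * klFun t - 3 * (t - 1) ^ 2
  have hg_cont : Continuous g := by fun_prop
  have hg_deriv : ∀ t ≠ 0, HasDerivAt g (4 * ((t + 1) * log t - 2 * (t - 1))) t := by
    intro t ht
    refine ((((hasDerivAt_id t).const_mul 2).add_const 4).mul (hasDerivAt_klFun ht) |>.sub
      ((((hasDerivAt_id t).sub_const 1).pow 2).const_mul 3)).congr_deriv ?_
    simp only [klFun_apply, id]
    ring
  have hmin : IsMinOn g (Ici 0) 1 := by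
    refine isMinOn_Ici_of_deriv hg_cont.continuousAt hg_cont.continuousAt
      (fun t ht => (hg_deriv t ht.1.ne').differentiableAt.differentiableWithinAt)
      (fun t ht => (hg_deriv t (zero_lt_one.trans ht).ne').differentiableAt.differentiableWithinAt)
      (fun t ht => ?_) fun t ht => ?_
    · rw [(hg_deriv t ht.1.ne').deriv]
      linarith [add_one_mul_log_le_two_mul_sub_one ht.1 ht.2.le]
    · rw [(hg_deriv t (zero_lt_one.trans ht).ne').deriv]
      linarith [two_mul_sub_one_le_add_one_mul_log (le_of_lt ht)]
  have hg : g 1 ≤ g t := hmin ht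
  simp only [g, klFun_one] at hg
  linarith

lemma mul_log_div_sub_add_eq_mul_klFun (a : ℝ) {b : ℝ} (hb : b ≠ 0) :
    a * log (a / b) - a + b = b * klFun (a / b) := by
  rw [klFun_apply]
  field_simp
  ring

lemma mul_log_div_sub_add_nonneg {a b : ℝ} (ha : 0 ≤ a) (hb : 0 ≤ b) (hab : b = 0 → a = 0) :
    0 ≤ a * log (a / b) - a + b := by
  rcases hb.eq_or_lt with rfl | hb
  · simp [hab rfl]
  rw [mul_log_div_sub_add_eq_mul_klFun a hb.ne']
  exact mul_nonneg hb.le (klFun_nonneg (div_nonneg ha hb.le))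

lemma three_mul_sq_sub_le_mul_mul_log_div {a b : ℝ} (ha : 0 ≤ a) (hb : 0 ≤ b)
    (hab : b = 0 → a = 0) :
    3 * (a - b) ^ 2 ≤ (2 * a + 4 * b) * (a * log (a / b) - a + b) := by
  rcases hb.eq_or_lt with rfl | hb
  · simp [hab rfl]
  have key := three_mul_sq_sub_one_le_mul_klFun (div_nonneg ha hb.le)
  rw [mul_log_div_sub_add_eq_mul_klFun a hb.ne']
  calc 3 * (a - b) ^ 2 = b ^ 2 * (3 * (a / b - 1) ^ 2) := by field_simp
    _ ≤ b ^ 2 * ((2 * (a / b) + 4) * klFun (a / b)) := by gcongr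
    _ = (2 * a + 4 * b) * (b * klFun (a / b)) := by field_simp

lemma mul_abs_sub_le_sq_mul_add_mul_log_div {a b : ℝ} (ha : 0 ≤ a) (hb : 0 ≤ b)
    (hab : b = 0 → a = 0) (c : ℝ) :
    c * |a - b| ≤ c ^ 2 / 6 * (a + 2 * b) + (a * log (a / b) - a + b) := by
  have key := three_mul_sq_sub_le_mul_mul_log_div ha hb hab
  have hG := mul_log_div_sub_add_nonneg ha hb hab
  set G := a * log (a / b) - a + b
  refine le_of_sq_le_sq ?_ (by positivity)
  nlinarith [sq_abs (a - b), sq_nonneg (c ^ 2 / 6 * (a + 2 * b) - G),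
    mul_le_mul_of_nonneg_left key (sq_nonneg c)]

theorem pinsker_inequality_general {α : Type*} [MeasurableSpace α] (μ : Measure α)
    (p q : α → ℝ) (hp0 : ∀ x, 0 ≤ p x) (hq0 : ∀ x, 0 ≤ q x)
    (hp1 : ∫ x, p x ∂μ = 1) (hq1 : ∫ x, q x ∂μ = 1)
    (hac : ∀ᵐ x ∂μ, q x = 0 → p x = 0)
    (hint : Integrable (fun x => p x * Real.log (p x / q x)) μ) :
    ∫ x, |p x - q x| ∂μ ≤ Real.sqrt (2 * ∫ x, p x * Real.log (p x / q x) ∂μ) := by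
  have hp : Integrable p μ := .of_integral_ne_zero (by simp [hp1])
  have hq : Integrable q μ := .of_integral_ne_zero (by simp [hq1])
  set D := ∫ x, |p x - q x| ∂μ
  set K := ∫ x, p x * log (p x / q x) ∂μ
  have hint_sub : Integrable (fun x => p x * log (p x / q x) - p x) μ := hint.sub hp
  have hG_int : Integrable (fun x => p x * log (p x / q x) - p x + q x) μ := hint_sub.add hq
  have hw_int : Integrable (fun x => p x + 2 * q x) μ := hp.add (hq.const_mul 2)
  have hbound : D * D ≤ D ^ 2 / 6 * 3 + K := by
    calc D * D = ∫ x, D * |p x - q x| ∂μ := (integral_const_mul _ _).symm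
      _ ≤ ∫ x, (D ^ 2 / 6 * (p x + 2 * q x) + (p x * log (p x / q x) - p x + q x)) ∂μ := by
        refine integral_mono_ae ((hp.sub hq).abs.const_mul D) ((hw_int.const_mul _).add hG_int) ?_
        filter_upwards [hac] with x hx
        exact mul_abs_sub_le_sq_mul_add_mul_log_div (hp0 x) (hq0 x) hx D
      _ = D ^ 2 / 6 * 3 + K := by
        rw [integral_add (hw_int.const_mul _) hG_int, integral_const_mul,
          integral_add hp (hq.const_mul 2), integral_add hint_sub hq,
          integral_sub hint hp, integral_const_mul, hp1, hq1]
        ring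
  exact le_sqrt_of_sq_le (by linarith)

/-- Pinsker's inequality: for probability densities `p`, `q` w.r.t. a common σ-finite
measure `μ` (with `q = 0 → p = 0` a.e., so that KL is well defined and finite),
`‖p − q‖₁ ≤ √(2 KL(p‖q))` where `KL(p‖q) = ∫ p log(p/q)`. -/
theorem pinsker_inequality {α : Type*} [MeasurableSpace α] (μ : Measure α) [SigmaFinite μ]
    (p q : α → ℝ) (hp0 : ∀ x, 0 ≤ p x) (hq0 : ∀ x, 0 ≤ q x)
    (hpm : Measurable p) (hqm : Measurable q)
    (hp1 : ∫ x, p x ∂μ = 1) (hq1 : ∫ x, q x ∂μ = 1)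
    (hac : ∀ᵐ x ∂μ, q x = 0 → p x = 0)
    (hint : Integrable (fun x => p x * Real.log (p x / q x)) μ) :
    ∫ x, |p x - q x| ∂μ ≤ Real.sqrt (2 * ∫ x, p x * Real.log (p x / q x) ∂μ) :=
  pinsker_inequality_general μ p q hp0 hq0 hp1 hq1 hac hint
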